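/- Let D be a positive, 1-periodic, C² function and r a continuous 1-periodic function. Let q, λ, k ∈ ℝ and let φ be a positive, 1-periodic, C² function with L_q^λ[r;D]φ = kφ. Define h(x) := ∫₀ˣ D(t)^{−1/2} dt, let H : ℝ → ℝ be the inverse of h (so H(h(x)) = x and h(H(y)) = y for all x, y), and set P(y) := ln D(H(y)), R(y) := r(H(y)), s := 1/2 − q, and μ := λ/h(1). Then the function ψ(y) := √(D(H(y)))·exp(λ(y/h(1) − H(y)))·φ(H(y)) is positive, h(1)-periodic, C², and satisfies ψ''(y) − d/dy[(2μ + s·P'(y))·ψ(y)] + (R(y) + μ·s·P'(y) + μ²)·ψ(y) = k·ψ(y) for all y ∈ ℝ. In particular k_q^λ[r;D] equals the principal eigenvalue of the transformed operator at shift μ = λ·⟨√D⟩_H, where ⟨√D⟩_H = 1/h(1). -/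

import Mathlib

open Real MeasureTheory Set Filter Topology

noncomputable section

/-- The operator `L_q^λ[r;D]` acting on C² functions `ψ`:
`(L_q^λ[r;D]ψ)(x) = D ψ'' + ((1+q)D' − 2λD) ψ' + (qD'' + λ²D − (1+q)λD' + r) ψ`. -/
def Lop (q lam : ℝ) (r D ψ : ℝ → ℝ) (x : ℝ) : ℝ :=
  D x * deriv (deriv ψ) x + ((1 + q) * deriv D x - 2 * lam * D x) * deriv ψ x +
    (q * deriv (deriv D) x + lam ^ 2 * D x - (1 + q) * lam * deriv D x + r x) * ψ x

/-- `(k, ψ)` is a principal eigenpair of `L_q^λ[r;D]`: `ψ` is a positive, 1-periodic,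
C² function with `L_q^λ[r;D]ψ = kψ`. -/
def IsEigenpair (q lam : ℝ) (r D : ℝ → ℝ) (k : ℝ) (ψ : ℝ → ℝ) : Prop :=
  ContDiff ℝ 2 ψ ∧ (∀ x, 0 < ψ x) ∧ Function.Periodic ψ 1 ∧
    ∀ x, Lop q lam r D ψ x = k * ψ x

/-- The Freidlin–Gärtner infimum `inf_{λ>0} k(λ)/λ`, as an extended real number. -/
def speed (k : ℝ → ℝ) : EReal := ⨅ l : {l : ℝ // 0 < l}, ((k l.1 / l.1 : ℝ) : EReal)

/-! Writing `φ = e^{λx} w` conjugates `L_q^λ` into `L_q^0`. In the coordinate `y = h x` one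
has `H' = √D ∘ H`, and for `χ = (√D · w) ∘ H` both `χ' = (D' w / 2 + D w') ∘ H` and
`P' χ = (D' w) ∘ H` are again functions of `H y`, which gives
`χ'' - s (P' χ)' + R χ = (√D · L_q^0 w) ∘ H`. Finally `ψ = e^{μ y} χ`, and conjugating by
`e^{μ y}` removes exactly the `μ`-terms of the transformed operator. Periodicity comes from
`h (x + 1) = h x + h 1`, i.e. `H (y + h 1) = H y + 1`. -/

open Function

theorem StrictMono.continuous_of_rightInverse {h H : ℝ → ℝ} (hmono : StrictMono h)
    (hH : RightInverse H h) : Continuous H :=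
  (hmono.orderIsoOfRightInverse h H hH).symm.continuous

theorem StrictMono.rightInverse_add {h H : ℝ → ℝ} {T : ℝ} (hmono : StrictMono h)
    (hH : RightInverse H h) (hper : ∀ x, h (x + T) = h x + h T) (y : ℝ) :
    H (y + h T) = H y + T :=
  hmono.injective (by rw [hH, hper, hH])

theorem ContDiff.differentiable_deriv_of_two {f : ℝ → ℝ} (hf : ContDiff ℝ 2 f) :
    Differentiable ℝ (deriv f) :=
  (hf.deriv' (n := 1)).differentiable one_ne_zero

section Primitive

variable {g h : ℝ → ℝ}

theorem hasDerivAt_of_eq_integral (hg : Continuous g) (hh : ∀ x, h x = ∫ t in (0:ℝ)..x, g t)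
    (x : ℝ) : HasDerivAt h (g x) x :=
  (hg.integral_hasStrictDerivAt 0 x).hasDerivAt.congr_of_eventuallyEq (Eventually.of_forall hh)

theorem strictMono_of_eq_integral (hg : Continuous g) (hh : ∀ x, h x = ∫ t in (0:ℝ)..x, g t)
    (hpos : ∀ x, 0 < g x) : StrictMono h :=
  strictMono_of_deriv_pos fun x => (hasDerivAt_of_eq_integral hg hh x).deriv ▸ hpos x

theorem add_period_of_eq_integral (hg : Continuous g) (hh : ∀ x, h x = ∫ t in (0:ℝ)..x, g t)
    {T : ℝ} (hper : Periodic g T) (x : ℝ) : h (x + T) = h x + h T := by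
  simp only [hh]
  simpa using hper.intervalIntegral_add_eq_add 0 x fun a b => hg.intervalIntegrable a b

theorem hasDerivAt_rightInverse_of_eq_integral (hg : Continuous g)
    (hh : ∀ x, h x = ∫ t in (0:ℝ)..x, g t) (hpos : ∀ x, 0 < g x) {H : ℝ → ℝ}
    (hH : RightInverse H h) (y : ℝ) : HasDerivAt H (g (H y))⁻¹ y :=
  (hasDerivAt_of_eq_integral hg hh (H y)).of_local_left_inverse
    ((strictMono_of_eq_integral hg hh hpos).continuous_of_rightInverse hH).continuousAt
    (hpos _).ne' (Eventually.of_forall hH)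

end Primitive

theorem contDiff_two_of_hasDerivAt_sqrt_comp {D H : ℝ → ℝ} (hD : ContDiff ℝ 1 D)
    (hDpos : ∀ x, 0 < D x) (hH : ∀ y, HasDerivAt H (√(D (H y))) y) : ContDiff ℝ 2 H := by
  have hdiff : Differentiable ℝ H := fun y => (hH y).differentiableAt
  have hderiv : deriv H = fun y => √(D (H y)) := funext fun y => (hH y).deriv
  have hH1 : ContDiff ℝ 1 H :=
    contDiff_one_iff_deriv.2 ⟨hdiff, hderiv ▸ (hD.continuous.comp hdiff.continuous).sqrt⟩
  refine (contDiff_succ_iff_deriv (n := 1)).2 ⟨hdiff, fun h => by simp at h, ?_⟩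
  rw [hderiv]
  exact (hD.comp hH1).sqrt fun y => (hDpos _).ne'

theorem Lop_zero_exp_neg_mul (q lam : ℝ) (r D : ℝ → ℝ) {φ : ℝ → ℝ} {x : ℝ}
    (hφ : Differentiable ℝ φ) (hφ' : DifferentiableAt ℝ (deriv φ) x) :
    Lop q 0 r D (fun t => exp (-(lam * t)) * φ t) x = exp (-(lam * x)) * Lop q lam r D φ x := by
  have hE : ∀ t, HasDerivAt (fun t => exp (-(lam * t))) (exp (-(lam * t)) * -lam) t := fun t => by
    simpa using ((hasDerivAt_id t).const_mul lam).neg.exp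
  have hw : ∀ t, HasDerivAt (fun t => exp (-(lam * t)) * φ t)
      (exp (-(lam * t)) * -lam * φ t + exp (-(lam * t)) * deriv φ t) t :=
    fun t => (hE t).fun_mul (hφ t).hasDerivAt
  have hw' := (((hE x).mul_const (-lam)).fun_mul (hφ x).hasDerivAt).fun_add
    ((hE x).fun_mul hφ'.hasDerivAt)
  simp only [Lop, funext fun t => (hw t).deriv, hw'.deriv, (hw x).deriv]
  ring

theorem IsEigenpair.Lop_zero_exp_neg_mul {q lam k : ℝ} {r D φ : ℝ → ℝ}
    (hφ : IsEigenpair q lam r D k φ) (x : ℝ) :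
    Lop q 0 r D (fun t => exp (-(lam * t)) * φ t) x = k * (exp (-(lam * x)) * φ x) := by
  rw [_root_.Lop_zero_exp_neg_mul q lam r D (hφ.1.differentiable two_ne_zero)
    (hφ.1.differentiable_deriv_of_two x), hφ.2.2.2]
  ring

def driftOp (b c Φ : ℝ → ℝ) (y : ℝ) : ℝ :=
  deriv (deriv Φ) y - deriv (fun z => b z * Φ z) y + c y * Φ y

theorem driftOp_exp_mul (μ s : ℝ) {p c χ : ℝ → ℝ} {y : ℝ} (hχ : Differentiable ℝ χ)
    (hχ' : DifferentiableAt ℝ (deriv χ) y) (hp : DifferentiableAt ℝ p y) :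
    driftOp (fun z => 2 * μ + s * p z) (fun z => c z + μ * s * p z + μ ^ 2)
        (fun z => exp (μ * z) * χ z) y =
      exp (μ * y) * driftOp (fun z => s * p z) c χ y := by
  have hE : ∀ z, HasDerivAt (fun z => exp (μ * z)) (exp (μ * z) * μ) z := fun z => by
    simpa using ((hasDerivAt_id z).const_mul μ).exp
  have hψ : ∀ z, HasDerivAt (fun z => exp (μ * z) * χ z)
      (exp (μ * z) * μ * χ z + exp (μ * z) * deriv χ z) z :=
    fun z => (hE z).fun_mul (hχ z).hasDerivAt
  have hψ' := (((hE y).mul_const μ).fun_mul (hχ y).hasDerivAt).fun_add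
    ((hE y).fun_mul hχ'.hasDerivAt)
  have hdrift := ((hp.hasDerivAt.const_mul s).const_add (2 * μ)).fun_mul (hψ y)
  have hdrift₀ := (hp.hasDerivAt.const_mul s).fun_mul (hχ y).hasDerivAt
  simp only [driftOp]
  rw [funext fun z => (hψ z).deriv, hψ'.deriv, hdrift.deriv, hdrift₀.deriv]
  ring

theorem driftOp_liouville (q : ℝ) (r : ℝ → ℝ) {D H w : ℝ → ℝ}
    (hD : Differentiable ℝ D) (hD' : Differentiable ℝ (deriv D)) (hDpos : ∀ x, 0 < D x)
    (hH : ∀ y, HasDerivAt H (√(D (H y))) y) (hw : Differentiable ℝ w)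
    (hw' : Differentiable ℝ (deriv w)) (y : ℝ) :
    driftOp (fun z => (1 / 2 - q) * deriv (fun z => log (D (H z))) z) (fun z => r (H z))
        (fun z => √(D (H z)) * w (H z)) y =
      √(D (H y)) * Lop q 0 r D w (H y) := by
  have comp : ∀ {f : ℝ → ℝ}, Differentiable ℝ f → ∀ z,
      HasDerivAt (fun z => f (H z)) (deriv f (H z) * √(D (H z))) z :=
    fun hf z => (hf (H z)).hasDerivAt.comp z (hH z)
  have hsqrt : ∀ z, HasDerivAt (fun z => √(D (H z))) (deriv D (H z) / 2) z := fun z => by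
    have hne := (sqrt_pos.2 (hDpos (H z))).ne'
    refine ((comp hD z).sqrt (hDpos _).ne').congr_deriv ?_
    field_simp
  have hχ : deriv (fun z => √(D (H z)) * w (H z)) =
      fun z => deriv D (H z) / 2 * w (H z) + D (H z) * deriv w (H z) := funext fun z => by
    rw [((hsqrt z).fun_mul (comp hw z)).deriv]
    linear_combination deriv w (H z) * mul_self_sqrt (hDpos (H z)).le
  have hdrift : (fun z => (1 / 2 - q) * deriv (fun z => log (D (H z))) z *
      (√(D (H z)) * w (H z))) = fun z => (1 / 2 - q) * (deriv D (H z) * w (H z)) :=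
    funext fun z => by
      rw [((comp hD z).log (hDpos _).ne').deriv]
      have hne := (hDpos (H z)).ne'
      field_simp
      rw [sq_sqrt (hDpos _).le]
  simp only [driftOp]
  rw [hχ, hdrift, ((((comp hD' y).div_const 2).fun_mul (comp hw y)).fun_add
    ((comp hD y).fun_mul (comp hw' y))).deriv,
    (((comp hD' y).fun_mul (comp hw y)).const_mul _).deriv]
  simp only [Lop]
  ring

theorem driftOp_exp_mul_liouville (q μ : ℝ) (r : ℝ → ℝ) {D H w : ℝ → ℝ}
    (hD : ContDiff ℝ 2 D) (hDpos : ∀ x, 0 < D x) (hH : ∀ y, HasDerivAt H (√(D (H y))) y)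
    (hw : ContDiff ℝ 2 w) (y : ℝ) :
    driftOp (fun z => 2 * μ + (1 / 2 - q) * deriv (fun z => log (D (H z))) z)
        (fun z => r (H z) + μ * (1 / 2 - q) * deriv (fun z => log (D (H z))) z + μ ^ 2)
        (fun z => exp (μ * z) * (√(D (H z)) * w (H z))) y =
      exp (μ * y) * (√(D (H y)) * Lop q 0 r D w (H y)) := by
  have hHC := contDiff_two_of_hasDerivAt_sqrt_comp (hD.of_le one_le_two) hDpos hH
  have hχ : ContDiff ℝ 2 fun z => √(D (H z)) * w (H z) :=
    ((hD.comp hHC).sqrt fun _ => (hDpos _).ne').mul (hw.comp hHC)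
  have hP : ContDiff ℝ 2 fun z => log (D (H z)) := (hD.comp hHC).log fun _ => (hDpos _).ne'
  rw [driftOp_exp_mul μ (1 / 2 - q) (hχ.differentiable two_ne_zero)
      (hχ.differentiable_deriv_of_two y) (hP.differentiable_deriv_of_two y),
    driftOp_liouville q r (hD.differentiable two_ne_zero) hD.differentiable_deriv_of_two hDpos
      hH (hw.differentiable two_ne_zero) hw.differentiable_deriv_of_two y]

theorem stmt_10 (D r : ℝ → ℝ) (hD : ContDiff ℝ 2 D) (hDpos : ∀ x, 0 < D x)
    (hDper : Function.Periodic D 1)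
    (q lam k : ℝ) (φ : ℝ → ℝ) (hφ : IsEigenpair q lam r D k φ)
    (h H : ℝ → ℝ) (hh : ∀ x, h x = ∫ t in (0:ℝ)..x, 1 / Real.sqrt (D t))
    (hH2 : ∀ y, h (H y) = y) :
    let P : ℝ → ℝ := fun y => Real.log (D (H y))
    let R : ℝ → ℝ := fun y => r (H y)
    let s : ℝ := 1 / 2 - q
    let μ : ℝ := lam / h 1
    let ψ : ℝ → ℝ := fun y =>
      Real.sqrt (D (H y)) * Real.exp (lam * (y / h 1 - H y)) * φ (H y)
    (∀ y, 0 < ψ y) ∧ Function.Periodic ψ (h 1) ∧ ContDiff ℝ 2 ψ ∧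
      ∀ y, deriv (deriv ψ) y - deriv (fun z => (2 * μ + s * deriv P z) * ψ z) y +
          (R y + μ * s * deriv P y + μ ^ 2) * ψ y = k * ψ y := by
  obtain ⟨hφC, hφpos, hφper, -⟩ := id hφ
  intro P R s μ ψ
  have hg : Continuous fun t => 1 / √(D t) :=
    continuous_const.div hD.continuous.sqrt fun t => (sqrt_pos.2 (hDpos t)).ne'
  have hgpos : ∀ t, 0 < 1 / √(D t) := fun t => one_div_pos.2 (sqrt_pos.2 (hDpos t))
  have hH : ∀ y, HasDerivAt H (√(D (H y))) y := fun y => by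
    simpa using hasDerivAt_rightInverse_of_eq_integral hg hh hgpos hH2 y
  have hHC := contDiff_two_of_hasDerivAt_sqrt_comp (hD.of_le one_le_two) hDpos hH
  have hHper : ∀ y, H (y + h 1) = H y + 1 :=
    (strictMono_of_eq_integral hg hh hgpos).rightInverse_add hH2
      (add_period_of_eq_integral hg hh fun t => by simp only [hDper t])
  have hψ : ψ = fun y => exp (μ * y) * (√(D (H y)) * (exp (-(lam * H y)) * φ (H y))) :=
    funext fun y => by
      simp only [ψ, μ]
      rw [show lam * (y / h 1 - H y) = lam / h 1 * y + -(lam * H y) by ring, exp_add]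
      ring
  refine ⟨fun y => mul_pos (mul_pos (sqrt_pos.2 (hDpos _)) (exp_pos _)) (hφpos _), fun y => ?_,
    (((hD.comp hHC).sqrt fun _ => (hDpos _).ne').mul
      (contDiff_const.mul ((contDiff_id.div_const _).sub hHC)).exp).mul (hφC.comp hHC),
    fun y => ?_⟩
  · have hh1 : h 1 ≠ 0 := fun h0 => by simpa [h0] using hHper 0
    simp only [ψ]
    rw [hHper, hDper, hφper, add_div, div_self hh1, add_sub_add_right_eq_sub]
  · rw [hψ]
    refine (driftOp_exp_mul_liouville q μ r hD hDpos hH (w := fun t => exp (-(lam * t)) * φ t)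
      ((contDiff_const.mul contDiff_id).neg.exp.mul hφC) y).trans ?_
    rw [hφ.Lop_zero_exp_neg_mul]
    ring
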